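/- arXiv:2004.09549 — 6 statements merged into one kernel-verified Lean document; each statement's English description precedes it below -/
import Mathlib

section
/- (Bounding SER in terms of NMSE.) Let K be a power of 2 and let β ∈ ℂ^{LM} be a valid message vector. Let s ∈ ℂ^{LM} be arbitrary and let τ_1,…,τ_L > 0. Let β^T = η(s,τ) be the soft-decision estimate, and let β̂ ∈ ℂ^{LM} be any hard-decision estimate such that, for each ℓ ∈ [L], β̂_{sec(ℓ)} ∈ B_{M,K} maximizes Re[(s_{sec(ℓ)})* b] over b ∈ B_{M,K}. Then the section error rate SER = (1/L)·Σ_{ℓ=1}^L 1{β̂_{sec(ℓ)} ≠ β_{sec(ℓ)}} satisfies: SER ≤ 4·‖β^T − β‖²/L if K ∈ {1,2,4}, and SER ≤ sin(π/K)^{−4}·‖β^T − β‖²/L if K ≥ 8. -/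
/-!
Where the hard decision of section `ℓ` is wrong, it carries at least the posterior weight of
the true symbol, so the true symbol has at most half of the section's posterior mass. Distinct
`K`-PSK symbols have correlation `Re(conj π_k' · π_k) ≤ c`, with `c = cos(2π/K) = 1 - 2 sin²(π/K)`
(and `c ≤ 0` for `K ≤ 4`). Projecting `η_j - β_j` onto the true symbol at its position `j` then
gives `‖η_j - β_j‖ ≥ (1 - c)/2`, so `((1 - c)/2)² · #{wrong sections} ≤ ‖η - β‖²`.
-/

open Finset

noncomputable section

/-- The `k`-th symbol of the K-PSK constellation, `π_k = exp(i·2πk/K)`. -/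
def psk (K k : ℕ) : ℂ := Complex.exp (2 * (Real.pi : ℂ) * Complex.I * (k : ℂ) / (K : ℂ))

/-- `B_{M,K}`: vectors in `ℂ^M` with exactly one non-zero entry, whose value is a
`K`-PSK symbol. -/
def BMK (M K : ℕ) : Set (Fin M → ℂ) :=
  {b | ∃ m : Fin M, ∃ k ∈ Finset.Icc 1 K, b = fun m' => if m' = m then psk K k else 0}

/-- `b` is a hard-decision estimate for the section statistic `s`: it lies in `B_{M,K}`
and maximizes `Re[(s)* b']` over `b' ∈ B_{M,K}`. -/
def IsHardDec (M K : ℕ) (s b : Fin M → ℂ) : Prop :=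
  b ∈ BMK M K ∧ ∀ b' ∈ BMK M K,
    (∑ m, (starRingEnd ℂ) (s m) * b' m).re ≤ (∑ m, (starRingEnd ℂ) (s m) * b m).re

/-- The sectionwise Bayes-optimal denoiser `η` with per-section parameters `τ_ℓ`:
for `j` in section `ℓ`,
`η_j(s,τ) = (∑_k π_k e^{Re(conj(s_j)π_k)/τ_ℓ}) / (∑_{j'∈sec(ℓ)} ∑_{k'} e^{Re(conj(s_{j'})π_{k'})/τ_ℓ})`. -/
def eta (K L M : ℕ) (τ : Fin L → ℝ) (s : Fin L × Fin M → ℂ) (j : Fin L × Fin M) : ℂ :=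
  (∑ k ∈ Finset.Icc 1 K, psk K k *
      (Real.exp (((starRingEnd ℂ) (s j) * psk K k).re / τ j.1) : ℂ)) /
  ((∑ m : Fin M, ∑ k ∈ Finset.Icc 1 K,
      Real.exp (((starRingEnd ℂ) (s (j.1, m)) * psk K k).re / τ j.1) : ℝ) : ℂ)

open Classical in
/-- Real-valued indicator of a proposition. -/
def ind (p : Prop) : ℝ := if p then 1 else 0

open Real

lemma psk_eq_exp_mul_I (K k : ℕ) :
    psk K k = Complex.exp (((2 * π * k / K : ℝ) : ℂ) * Complex.I) := by
  rw [psk]; push_cast; ring_nf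

lemma norm_psk (K k : ℕ) : ‖psk K k‖ = 1 := by
  rw [psk_eq_exp_mul_I, Complex.norm_exp_ofReal_mul_I]

lemma re_conj_psk_mul_psk (K k k' : ℕ) :
    ((starRingEnd ℂ) (psk K k') * psk K k).re = cos (2 * π * ((k : ℝ) - k') / K) := by
  simp only [psk_eq_exp_mul_I, Complex.mul_re, Complex.conj_re, Complex.conj_im,
    Complex.exp_ofReal_mul_I_re, Complex.exp_ofReal_mul_I_im]
  rw [show 2 * π * ((k : ℝ) - k') / K = 2 * π * k / K - 2 * π * k' / K by ring, cos_sub]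
  ring

lemma cos_le_cos_of_mem_Icc_two_pi_sub {a x : ℝ} (ha : 0 ≤ a) (hax : a ≤ x)
    (hxa : x ≤ 2 * π - a) : cos x ≤ cos a := by
  rcases le_total x π with hx | hx
  · exact cos_le_cos_of_nonneg_of_le_pi ha hx hax
  · rw [← cos_two_pi_sub x]
    exact cos_le_cos_of_nonneg_of_le_pi ha (by linarith) (by linarith)

lemma re_conj_psk_mul_psk_le {K k k' : ℕ} (hk : k ∈ Icc 1 K) (hk' : k' ∈ Icc 1 K)
    (hne : k ≠ k') : ((starRingEnd ℂ) (psk K k') * psk K k).re ≤ cos (2 * π / K) := by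
  rw [mem_Icc] at hk hk'
  have hK : (0 : ℝ) < K := by exact_mod_cast hk.1.trans hk.2
  have hk_le : (k : ℝ) ≤ K := by exact_mod_cast hk.2
  have hk'_le : (k' : ℝ) ≤ K := by exact_mod_cast hk'.2
  have hk_ge : (1 : ℝ) ≤ k := by exact_mod_cast hk.1
  have hk'_ge : (1 : ℝ) ≤ k' := by exact_mod_cast hk'.1
  have hd_ge : 1 ≤ |(k : ℝ) - k'| := by
    rcases Nat.lt_or_gt_of_ne hne with h | h
    · have : (k : ℝ) + 1 ≤ k' := by exact_mod_cast h
      exact le_abs.2 (Or.inr (by linarith))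
    · have : (k' : ℝ) + 1 ≤ k := by exact_mod_cast h
      exact le_abs.2 (Or.inl (by linarith))
  have hd_le : |(k : ℝ) - k'| ≤ K - 1 := abs_sub_le_iff.2 ⟨by linarith, by linarith⟩
  rw [re_conj_psk_mul_psk, ← cos_abs, abs_div, abs_mul, abs_of_pos two_pi_pos, abs_of_pos hK]
  apply cos_le_cos_of_mem_Icc_two_pi_sub (by positivity)
  · exact div_le_div_of_nonneg_right (le_mul_of_one_le_right two_pi_pos.le hd_ge) hK.le
  · rw [div_le_iff₀ hK]
    nlinarith [pi_pos, mul_div_cancel₀ (2 * π) hK.ne']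

lemma div_two_le_norm_sum_smul_sub {ι : Type*} {S : Finset ι} {v : ι → ℂ} {p : ι → ℝ}
    {i₀ : ι} {c : ℝ} (hi₀ : i₀ ∈ S) (hv : ‖v i₀‖ = 1) (hc : 0 ≤ c)
    (hcorr : ∀ i ∈ S, i ≠ i₀ → ((starRingEnd ℂ) (v i₀) * v i).re ≤ c)
    (hp : ∀ i ∈ S, 0 ≤ p i) (hp_sum : ∑ i ∈ S, p i ≤ 1) (hp₀ : p i₀ ≤ 1 / 2) :
    (1 - c) / 2 ≤ ‖∑ i ∈ S, p i • v i - v i₀‖ := by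
  classical
  set u := v i₀
  have hu : (starRingEnd ℂ) u * u = 1 := by rw [Complex.conj_mul', hv]; norm_num
  have hcorr_sum : ∑ i ∈ S, p i * ((starRingEnd ℂ) u * v i).re ≤ p i₀ + c * (1 - p i₀) :=
    calc ∑ i ∈ S, p i * ((starRingEnd ℂ) u * v i).re
        = p i₀ + ∑ i ∈ S.erase i₀, p i * ((starRingEnd ℂ) u * v i).re := by
          rw [← add_sum_erase _ _ hi₀, hu, Complex.one_re, mul_one]
      _ ≤ p i₀ + ∑ i ∈ S.erase i₀, p i * c := by
          gcongr with i hi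
          · exact hp i (mem_of_mem_erase hi)
          · exact hcorr i (mem_of_mem_erase hi) (ne_of_mem_erase hi)
      _ = p i₀ + c * (∑ i ∈ S, p i - p i₀) := by
          rw [← sum_mul, sum_erase_eq_sub hi₀]; ring
      _ ≤ p i₀ + c * (1 - p i₀) := by gcongr
  have hre : ((starRingEnd ℂ) u * (u - ∑ i ∈ S, p i • v i)).re
      = 1 - ∑ i ∈ S, p i * ((starRingEnd ℂ) u * v i).re := by
    simp only [mul_sub, hu, mul_sum, mul_smul_comm, Complex.sub_re, Complex.one_re,
      Complex.re_sum, Complex.smul_re, smul_eq_mul]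
  have hnorm :
      ‖∑ i ∈ S, p i • v i - u‖ = ‖(starRingEnd ℂ) u * (u - ∑ i ∈ S, p i • v i)‖ := by
    rw [norm_mul, Complex.norm_conj, hv, one_mul, norm_sub_rev]
  have hp₀_nonneg := hp i₀ hi₀
  have key : (1 - c) * (1 - p i₀) ≤ ‖∑ i ∈ S, p i • v i - u‖ := by
    rw [hnorm]; linarith [Complex.re_le_norm ((starRingEnd ℂ) u * (u - ∑ i ∈ S, p i • v i))]
  rcases le_or_gt c 1 with hc1 | hc1
  · nlinarith
  · linarith [norm_nonneg (∑ i ∈ S, p i • v i - u)]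

lemma re_conj_psk_mul_psk_nonpos {K k k' : ℕ} (hK : K = 1 ∨ K = 2 ∨ K = 4)
    (hk : k ∈ Icc 1 K) (hk' : k' ∈ Icc 1 K) (hne : k ≠ k') :
    ((starRingEnd ℂ) (psk K k') * psk K k).re ≤ 0 := by
  refine (re_conj_psk_mul_psk_le hk hk' hne).trans ?_
  rcases hK with rfl | rfl | rfl
  · rw [mem_Icc] at hk hk'; omega
  · rw [show 2 * π / ((2 : ℕ) : ℝ) = π by push_cast; ring, cos_pi]; norm_num
  · rw [show 2 * π / ((4 : ℕ) : ℝ) = π / 2 by push_cast; ring, cos_pi_div_two]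

def pskWeight (K : ℕ) (t : ℝ) (z : ℂ) (k : ℕ) : ℝ :=
  Real.exp (((starRingEnd ℂ) z * psk K k).re / t)

lemma IsHardDec.pskWeight_le {M K : ℕ} {sv : Fin M → ℂ} {m₁ : Fin M} {k₁ : ℕ}
    (h : IsHardDec M K sv fun m => if m = m₁ then psk K k₁ else 0) {t : ℝ} (ht : 0 ≤ t)
    {m : Fin M} {k : ℕ} (hk : k ∈ Icc 1 K) :
    pskWeight K t (sv m) k ≤ pskWeight K t (sv m₁) k₁ := by
  have hmax := h.2 _ ⟨m, k, hk, rfl⟩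
  simp only [mul_ite, mul_zero, sum_ite_eq', mem_univ, if_true] at hmax
  exact Real.exp_le_exp.2 (div_le_div_of_nonneg_right hmax ht)

lemma eta_eq_sum_smul (K L M : ℕ) (τ : Fin L → ℝ) (s : Fin L × Fin M → ℂ) (ℓ : Fin L)
    (m : Fin M) :
    eta K L M τ s (ℓ, m) = ∑ k ∈ Icc 1 K, (pskWeight K (τ ℓ) (s (ℓ, m)) k /
      ∑ i ∈ univ ×ˢ Icc 1 K, pskWeight K (τ ℓ) (s (ℓ, i.1)) i.2) • psk K k := by
  rw [eta, sum_product, sum_div]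
  refine sum_congr rfl fun k _ => ?_
  rw [Complex.real_smul]
  simp only [pskWeight]
  push_cast
  ring

lemma sq_le_sum_norm_eta_sub {K L M : ℕ} {τ : Fin L → ℝ} {s β βhat : Fin L × Fin M → ℂ}
    {c : ℝ} (hc₀ : 0 ≤ c) (hc₁ : c ≤ 1)
    (hcorr : ∀ k ∈ Icc 1 K, ∀ k' ∈ Icc 1 K, k ≠ k' →
      ((starRingEnd ℂ) (psk K k') * psk K k).re ≤ c)
    {ℓ : Fin L} (hτ : 0 ≤ τ ℓ) (hβ : (fun m => β (ℓ, m)) ∈ BMK M K)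
    (hhat : IsHardDec M K (fun m => s (ℓ, m)) (fun m => βhat (ℓ, m)))
    (hne : (fun m => βhat (ℓ, m)) ≠ fun m => β (ℓ, m)) :
    ((1 - c) / 2) ^ 2 ≤ ∑ m, ‖eta K L M τ s (ℓ, m) - β (ℓ, m)‖ ^ 2 := by
  obtain ⟨m₀, k₀, hk₀, hβ_eq⟩ := hβ
  obtain ⟨m₁, k₁, hk₁, hhat_eq⟩ := hhat.1
  rw [hhat_eq] at hhat
  set w : Fin M × ℕ → ℝ := fun i => pskWeight K (τ ℓ) (s (ℓ, i.1)) i.2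
  set S : Finset (Fin M × ℕ) := univ ×ˢ Icc 1 K
  have hw : ∀ i, 0 ≤ w i := fun i => (Real.exp_pos _).le
  have hmem₀ : (m₀, k₀) ∈ S := mem_product.2 ⟨mem_univ _, hk₀⟩
  have hmem₁ : (m₁, k₁) ∈ S := mem_product.2 ⟨mem_univ _, hk₁⟩
  have hZ : 0 < ∑ i ∈ S, w i := sum_pos (fun _ _ => Real.exp_pos _) ⟨_, hmem₀⟩
  have hne' : (m₀, k₀) ≠ (m₁, k₁) := by
    rintro ⟨⟩
    exact hne (hhat_eq.trans hβ_eq.symm)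
  -- the wrong hard decision weighs at least as much as the true symbol, which therefore
  -- carries at most half of the section's posterior mass
  have hhalf : 2 * w (m₀, k₀) ≤ ∑ i ∈ S, w i := by
    linarith [add_le_sum (fun i _ => hw i) hmem₀ hmem₁ hne',
      hhat.pskWeight_le hτ (m := m₀) hk₀]
  have hrow : ∑ k ∈ Icc 1 K, w (m₀, k) ≤ ∑ i ∈ S, w i := by
    rw [sum_product]
    exact single_le_sum (f := fun m => ∑ k ∈ Icc 1 K, w (m, k))
      (fun m _ => sum_nonneg fun k _ => hw (m, k)) (mem_univ m₀)
  have hdist : (1 - c) / 2 ≤ ‖eta K L M τ s (ℓ, m₀) - β (ℓ, m₀)‖ := by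
    rw [eta_eq_sum_smul, congrFun hβ_eq m₀, if_pos rfl]
    refine div_two_le_norm_sum_smul_sub hk₀ (norm_psk K k₀) hc₀
      (fun k hk hk_ne => hcorr k hk k₀ hk₀ hk_ne) (fun k _ => div_nonneg (hw (m₀, k)) hZ.le)
      ?_ ?_
    · rw [← sum_div, div_le_one hZ]; exact hrow
    · rw [div_le_iff₀ hZ]; linarith
  calc ((1 - c) / 2) ^ 2 ≤ ‖eta K L M τ s (ℓ, m₀) - β (ℓ, m₀)‖ ^ 2 :=
        pow_le_pow_left₀ (by linarith) hdist 2
    _ ≤ ∑ m, ‖eta K L M τ s (ℓ, m) - β (ℓ, m)‖ ^ 2 :=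
        single_le_sum (f := fun m => ‖eta K L M τ s (ℓ, m) - β (ℓ, m)‖ ^ 2)
          (fun _ _ => sq_nonneg _) (mem_univ m₀)

lemma ser_le_inv_mul_nmse {K L M : ℕ} {τ : Fin L → ℝ} {s β βhat : Fin L × Fin M → ℂ}
    {c : ℝ} (hc₀ : 0 ≤ c) (hc₁ : c < 1)
    (hcorr : ∀ k ∈ Icc 1 K, ∀ k' ∈ Icc 1 K, k ≠ k' →
      ((starRingEnd ℂ) (psk K k') * psk K k).re ≤ c)
    (hτ : ∀ ℓ, 0 ≤ τ ℓ) (hβ : ∀ ℓ : Fin L, (fun m => β (ℓ, m)) ∈ BMK M K)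
    (hhat : ∀ ℓ : Fin L, IsHardDec M K (fun m => s (ℓ, m)) (fun m => βhat (ℓ, m))) :
    (1 / (L : ℝ)) * ∑ ℓ : Fin L, ind ((fun m => βhat (ℓ, m)) ≠ fun m => β (ℓ, m))
      ≤ (((1 - c) / 2) ^ 2)⁻¹ * (∑ j, ‖eta K L M τ s j - β j‖ ^ 2) / L := by
  have hsections :
      ((1 - c) / 2) ^ 2 * ∑ ℓ : Fin L, ind ((fun m => βhat (ℓ, m)) ≠ fun m => β (ℓ, m))
        ≤ ∑ j, ‖eta K L M τ s j - β j‖ ^ 2 := by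
    rw [mul_sum, Fintype.sum_prod_type]
    refine sum_le_sum fun ℓ _ => ?_
    by_cases hne : (fun m => βhat (ℓ, m)) ≠ fun m => β (ℓ, m)
    · rw [ind, if_pos hne, mul_one]
      exact sq_le_sum_norm_eta_sub hc₀ hc₁.le hcorr (hτ ℓ) (hβ ℓ) (hhat ℓ) hne
    · rw [ind, if_neg hne, mul_zero]
      positivity
  rw [one_div_mul_eq_div]
  gcongr
  rwa [inv_mul_eq_div, le_div_iff₀' (pow_pos (by linarith) 2)]

theorem ser_le_nmse_general (K L M : ℕ)
    (β : Fin L × Fin M → ℂ) (hβ : ∀ ℓ : Fin L, (fun m => β (ℓ, m)) ∈ BMK M K)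
    (s : Fin L × Fin M → ℂ) (τ : Fin L → ℝ) (hτ : ∀ ℓ, 0 < τ ℓ)
    (βhat : Fin L × Fin M → ℂ)
    (hhat : ∀ ℓ : Fin L, IsHardDec M K (fun m => s (ℓ, m)) (fun m => βhat (ℓ, m))) :
    ((K = 1 ∨ K = 2 ∨ K = 4) →
      (1 / (L : ℝ)) * ∑ ℓ : Fin L, ind ((fun m => βhat (ℓ, m)) ≠ fun m => β (ℓ, m))
        ≤ 4 * (∑ j, ‖eta K L M τ s j - β j‖ ^ 2) / L) ∧
    (8 ≤ K →
      (1 / (L : ℝ)) * ∑ ℓ : Fin L, ind ((fun m => βhat (ℓ, m)) ≠ fun m => β (ℓ, m))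
        ≤ (Real.sin (Real.pi / K) ^ 4)⁻¹ *
            (∑ j, ‖eta K L M τ s j - β j‖ ^ 2) / L) := by
  have hτ₀ : ∀ ℓ, 0 ≤ τ ℓ := fun ℓ => (hτ ℓ).le
  refine ⟨fun hK => ?_, fun hK => ?_⟩
  · have h := ser_le_inv_mul_nmse le_rfl one_pos
      (fun k hk k' hk' hne => re_conj_psk_mul_psk_nonpos hK hk hk' hne) hτ₀ hβ hhat
    norm_num at h ⊢
    exact h
  · have hK₈ : (8 : ℝ) ≤ K := by exact_mod_cast hK
    have hsin : 0 < sin (π / K) := by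
      apply sin_pos_of_pos_of_lt_pi (by positivity)
      rw [div_lt_iff₀ (by linarith)]
      nlinarith [pi_pos]
    have hcos : cos (2 * π / K) = 1 - 2 * sin (π / K) ^ 2 := by
      rw [← cos_two_mul_eq_one_sub, mul_div_assoc]
    have hcos₀ : 0 ≤ cos (2 * π / K) := by
      apply cos_nonneg_of_neg_pi_div_two_le_of_le
      · linarith [pi_pos, (by positivity : 0 ≤ 2 * π / K)]
      · rw [div_le_div_iff₀ (by linarith) two_pos]
        nlinarith [pi_pos]
    have h := ser_le_inv_mul_nmse hcos₀ (by nlinarith)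
      (fun k hk k' hk' hne => re_conj_psk_mul_psk_le hk hk' hne) hτ₀ hβ hhat
    rwa [hcos, show ((1 - (1 - 2 * sin (π / K) ^ 2)) / 2) ^ 2 = sin (π / K) ^ 4 by ring] at h

/-- **Bounding the section error rate in terms of the normalized mean squared error.**
Let `K` be a power of 2, `β` a valid message vector, `s ∈ ℂ^{LM}` arbitrary, `τ_ℓ > 0`,
`β^T = η(s,τ)` the soft decision, and `β̂` any sectionwise hard-decision maximizer.
Then `SER ≤ 4‖β^T − β‖²/L` if `K ∈ {1,2,4}` and `SER ≤ sin(π/K)^{−4}·‖β^T − β‖²/L`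
if `K ≥ 8`. -/
theorem ser_le_nmse (K L M : ℕ) (hK : ∃ m : ℕ, K = 2 ^ m) (hL : 0 < L)
    (β : Fin L × Fin M → ℂ) (hβ : ∀ ℓ : Fin L, (fun m => β (ℓ, m)) ∈ BMK M K)
    (s : Fin L × Fin M → ℂ) (τ : Fin L → ℝ) (hτ : ∀ ℓ, 0 < τ ℓ)
    (βhat : Fin L × Fin M → ℂ)
    (hhat : ∀ ℓ : Fin L, IsHardDec M K (fun m => s (ℓ, m)) (fun m => βhat (ℓ, m))) :
    ((K = 1 ∨ K = 2 ∨ K = 4) →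
      (1 / (L : ℝ)) * ∑ ℓ : Fin L, ind ((fun m => βhat (ℓ, m)) ≠ fun m => β (ℓ, m))
        ≤ 4 * (∑ j, ‖eta K L M τ s j - β j‖ ^ 2) / L) ∧
    (8 ≤ K →
      (1 / (L : ℝ)) * ∑ ℓ : Fin L, ind ((fun m => βhat (ℓ, m)) ≠ fun m => β (ℓ, m))
        ≤ (Real.sin (Real.pi / K) ^ 4)⁻¹ *
            (∑ j, ‖eta K L M τ s j - β j‖ ^ 2) / L) :=
  ser_le_nmse_general K L M β hβ s τ hτ βhat hhat
end
end

section
/- Let K ≥ 4 be a multiple of 4 and M ≥ 2. For every ν > 0, E_{K,M}(ν) ≥ − 2·(1 + cot(2π/K))·(KM)^{−ν/(2(1+cot(2π/K))²)} / √(2π·ν·ln(KM)). -/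
/-!
Write `t = cot (2π/K)`, `z = U₁` and pair each symbol `π_k` with its antipode
`π_{k+K/2} = -π_k`. With `w_k = μ Re π_k + √μ Re (z conj π_k)`, the pair contributes
`2 Re π_k · sinh w_k` to the numerator `N`, and `Re π_k · w_k ≥ √μ (Re π_k)² (√μ + Re z - t |Im z|)`
because for `4 ∣ K` every symbol satisfies `|Im π_k · Re π_k| ≤ t (Re π_k)²`. So `N ≥ 0` off the
event `Re z - t |Im z| < -√μ`, and as `|N / D| ≤ 1` everywhere, `E_{K,M}(ν)` is at least minus the
probability of that event. The event lies in two half-planes `{-Re z ± t Im z > √μ}`;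
`-Re z ± t Im z` is `N(0, 1 + t²)`, and Mills' inequality `P(X > a) ≤ v φ_v(a) / a` for
`X ~ N(0, v)` bounds each by `√(1 + t²) e^{-μ / (2(1 + t²))} / √(2πμ)`; finally
`√(1 + t²) ≤ 1 + t`.
-/

open MeasureTheory ProbabilityTheory Finset

noncomputable section

/-- Law of `(U₁, (U₂,…,U_M))` where `U_j = U_j^R + i·U_j^I` with all real/imaginary parts
i.i.d. standard Gaussian `N(0,1)` (so each `U_j ~ CN(0,2)`): the first factor carries the
real and imaginary parts of `U₁`, the second the real and imaginary parts of `U₂,…,U_M`. -/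
def seMeasure (M : ℕ) :
    Measure ((ℝ × ℝ) × ((Fin (M - 1) → ℝ) × (Fin (M - 1) → ℝ))) :=
  ((gaussianReal 0 1).prod (gaussianReal 0 1)).prod
    ((Measure.pi fun _ => gaussianReal 0 1).prod (Measure.pi fun _ => gaussianReal 0 1))

/-- The state-evolution functional `E_{K,M}(ν) = E[N/D]`, with `μ = ν·ln(KM)`,
`N = ∑_{k=1}^K Re(π_k)·exp(μ Re(π_k) + √μ Re(U₁ conj(π_k)))` and
`D = ∑_{a=1}^K exp(μ Re(π_a) + √μ Re(U₁ conj(π_a)))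
   + ∑_{j=2}^M ∑_{b=1}^K exp(√μ Re(U_j conj(π_b)))`,
where `U₁,…,U_M` are i.i.d. `CN(0,2)`. -/
def EKM (K M : ℕ) (ν : ℝ) : ℝ :=
  ∫ u, (∑ k ∈ Finset.Icc 1 K, (psk K k).re *
          Real.exp (ν * Real.log ((K : ℝ) * M) * (psk K k).re +
            Real.sqrt (ν * Real.log ((K : ℝ) * M)) *
              (((u.1.1 : ℂ) + (u.1.2 : ℂ) * Complex.I) * (starRingEnd ℂ) (psk K k)).re)) /
       ((∑ a ∈ Finset.Icc 1 K,
          Real.exp (ν * Real.log ((K : ℝ) * M) * (psk K a).re +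
            Real.sqrt (ν * Real.log ((K : ℝ) * M)) *
              (((u.1.1 : ℂ) + (u.1.2 : ℂ) * Complex.I) * (starRingEnd ℂ) (psk K a)).re)) +
        ∑ j : Fin (M - 1), ∑ b ∈ Finset.Icc 1 K,
          Real.exp (Real.sqrt (ν * Real.log ((K : ℝ) * M)) *
            (((u.2.1 j : ℂ) + (u.2.2 j : ℂ) * Complex.I) * (starRingEnd ℂ) (psk K b)).re))
    ∂(seMeasure M)

open Real

lemma abs_sin_mul_abs_cos_le_cot_mul_sq_of_add_le {a x : ℝ} (ha : 0 < a) (hx : 0 ≤ x)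
    (hxa : x + a ≤ π / 2) : |sin x| * |cos x| ≤ cot a * |cos x| ^ 2 := by
  have hsa : 0 < sin a := sin_pos_of_pos_of_lt_pi ha (by linarith [pi_pos])
  have hsx : 0 ≤ sin x := sin_nonneg_of_nonneg_of_le_pi hx (by linarith [pi_pos])
  have hcx : 0 ≤ cos x := cos_nonneg_of_mem_Icc ⟨by linarith [pi_pos], by linarith⟩
  have hcxa : 0 ≤ cos (x + a) := cos_nonneg_of_mem_Icc ⟨by linarith [pi_pos], hxa⟩
  rw [cos_add] at hcxa
  rw [abs_of_nonneg hsx, abs_of_nonneg hcx, cot_eq_cos_div_sin, div_mul_eq_mul_div,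
    le_div_iff₀ hsa]
  nlinarith [mul_le_mul_of_nonneg_left (sub_nonneg.mpr hcxa) hcx]

/-- A multiple of `π / (2m)` that is not a zero of `cos` is at distance at least `π / (2m)` from
the zeros of `cos`. -/
lemma abs_sin_mul_abs_cos_nat_mul_le {m : ℕ} (hm : 0 < m) (k : ℕ) :
    |sin (k * (π / (2 * m)))| * |cos (k * (π / (2 * m)))|
      ≤ cot (π / (2 * m)) * |cos (k * (π / (2 * m)))| ^ 2 := by
  set a := π / (2 * m) with ha_def
  have ha : 0 < a := by positivity
  have hma : m * a = π / 2 := by simp only [ha_def]; field_simp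
  have base : ∀ j : ℕ, j ≤ m →
      |sin (j * a)| * |cos (j * a)| ≤ cot a * |cos (j * a)| ^ 2 := by
    intro j hj
    rcases hj.lt_or_eq with hj | rfl
    · refine abs_sin_mul_abs_cos_le_cot_mul_sq_of_add_le ha (by positivity) ?_
      have : (j : ℝ) + 1 ≤ m := by exact_mod_cast hj
      nlinarith
    · simp [hma]
  -- `|sin|` and `|cos|` are unchanged by `θ ↦ nπ ± θ`, which brings `k * a` to a `j * a`, `j ≤ m`.
  obtain ⟨q, r, hr, rfl⟩ : ∃ q r, r < 2 * m ∧ k = r + 2 * m * q :=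
    ⟨k / (2 * m), k % (2 * m), Nat.mod_lt _ (by omega), (Nat.mod_add_div k (2 * m)).symm⟩
  rcases le_or_gt r m with hrm | hrm
  · have hθ : ((r + 2 * m * q : ℕ) : ℝ) * a = r * a + q * π := by
      push_cast; linear_combination (2 * q : ℝ) * hma
    rw [hθ, sin_add_nat_mul_pi, cos_add_nat_mul_pi]
    simpa [abs_mul] using base r hrm
  · have hθ : ((r + 2 * m * q : ℕ) : ℝ) * a = ↑(q + 1) * π - ↑(2 * m - r) * a := by
      push_cast [Nat.cast_sub hr.le]; linear_combination (2 * q + 2 : ℝ) * hma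
    rw [hθ, sin_nat_mul_pi_sub, cos_nat_mul_pi_sub]
    simpa [abs_mul] using base (2 * m - r) (by omega)

lemma psk_eq_exp (K k : ℕ) : psk K k = Complex.exp ((2 * π * k / K : ℝ) * Complex.I) := by
  rw [psk]; push_cast; ring_nf

lemma psk_re (K k : ℕ) : (psk K k).re = cos (2 * π * k / K) := by
  rw [psk_eq_exp, Complex.exp_ofReal_mul_I_re]

lemma psk_im (K k : ℕ) : (psk K k).im = sin (2 * π * k / K) := by
  rw [psk_eq_exp, Complex.exp_ofReal_mul_I_im]

lemma abs_psk_re_le_one (K k : ℕ) : |(psk K k).re| ≤ 1 := by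
  rw [psk_re]; exact abs_cos_le_one _

lemma psk_add_half {n : ℕ} (hn : n ≠ 0) (k : ℕ) : psk (2 * n) (k + n) = -psk (2 * n) k := by
  have harg : 2 * (π : ℂ) * Complex.I * ((k + n : ℕ) : ℂ) / ((2 * n : ℕ) : ℂ)
      = 2 * π * Complex.I * k / ((2 * n : ℕ) : ℂ) + π * Complex.I := by
    push_cast; field_simp
  rw [psk, psk, harg, Complex.exp_add, Complex.exp_pi_mul_I, mul_neg_one]

lemma abs_psk_im_mul_re_le {K : ℕ} (hK : 4 ∣ K) (k : ℕ) :
    |(psk K k).im * (psk K k).re| ≤ cot (2 * π / K) * (psk K k).re ^ 2 := by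
  obtain ⟨m, rfl⟩ := hK
  rcases Nat.eq_zero_or_pos m with rfl | hm
  · simp [psk, cot_eq_cos_div_sin]
  have hθ : 2 * π * k / ((4 * m : ℕ) : ℝ) = k * (π / (2 * m)) := by
    push_cast; field_simp; ring
  have ha : 2 * π / ((4 * m : ℕ) : ℝ) = π / (2 * m) := by
    push_cast; field_simp; ring
  rw [psk_re, psk_im, hθ, ha, abs_mul, ← sq_abs]
  exact abs_sin_mul_abs_cos_nat_mul_le hm k

lemma cot_two_pi_div_nonneg {K : ℕ} (hK : 4 ≤ K) : 0 ≤ cot (2 * π / K) := by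
  have hK' : (4 : ℝ) ≤ K := by exact_mod_cast hK
  have h0 : 0 < 2 * π / K := by positivity
  have h1 : 2 * π / K ≤ π / 2 := by
    rw [div_le_div_iff₀ (by positivity) two_pos]; nlinarith [pi_pos]
  rw [cot_eq_cos_div_sin]
  exact div_nonneg (cos_nonneg_of_mem_Icc ⟨by linarith, h1⟩)
    (sin_nonneg_of_nonneg_of_le_pi h0.le (by linarith [pi_pos]))

lemma sum_Icc_two_mul {M : Type*} [AddCommMonoid M] (f : ℕ → M) (n : ℕ) :
    ∑ k ∈ Icc 1 (2 * n), f k = ∑ k ∈ Icc 1 n, (f k + f (k + n)) := by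
  rw [sum_add_distrib, ← zero_add 1, Icc_add_one_left_eq_Ioc, Icc_add_one_left_eq_Ioc,
    ← sum_Ioc_consecutive f (Nat.zero_le n) (by omega : n ≤ 2 * n)]
  have hshift := sum_map (Ioc 0 n) (addRightEmbedding n) f
  rw [map_add_right_Ioc, zero_add, ← two_mul] at hshift
  rw [hshift]
  rfl

lemma sum_psk_nonneg_of_antipodal {K : ℕ} (hK : 2 ∣ K) (f : ℂ → ℝ)
    (hf : ∀ k, 0 ≤ f (psk K k) + f (-psk K k)) : 0 ≤ ∑ k ∈ Icc 1 K, f (psk K k) := by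
  obtain ⟨n, rfl⟩ := hK
  rcases eq_or_ne n 0 with rfl | hn
  · simp
  rw [sum_Icc_two_mul]
  exact sum_nonneg fun k _ => by rw [psk_add_half hn]; exact hf k

lemma mul_sinh_nonneg {c w : ℝ} (h : 0 ≤ c * w) : 0 ≤ c * sinh w := by
  rcases lt_trichotomy w 0 with hw | rfl | hw
  · exact mul_nonneg_of_nonpos_of_nonpos (nonpos_of_mul_nonneg_left h hw)
      (sinh_neg_iff.mpr hw).le
  · simp
  · exact mul_nonneg (nonneg_of_mul_nonneg_left h hw) (sinh_nonneg_iff.mpr hw.le)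

lemma re_mul_exp_add_antipodal_nonneg {μ t : ℝ} (hμ : 0 ≤ μ) {z p : ℂ}
    (hp : |p.im * p.re| ≤ t * p.re ^ 2) (hz : -√μ ≤ z.re - t * |z.im|) :
    0 ≤ p.re * rexp (μ * p.re + √μ * (z * (starRingEnd ℂ) p).re)
      + (-p).re * rexp (μ * (-p).re + √μ * (z * (starRingEnd ℂ) (-p)).re) := by
  set w := μ * p.re + √μ * (z * (starRingEnd ℂ) p).re
  have hw : μ * (-p).re + √μ * (z * (starRingEnd ℂ) (-p)).re = -w := by
    simp only [w, map_neg, mul_neg, Complex.neg_re]; ring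
  have hpair : p.re * rexp w + (-p).re * rexp (-w) = 2 * (p.re * sinh w) := by
    rw [sinh_eq, Complex.neg_re]; ring
  rw [hw, hpair]
  refine mul_nonneg two_pos.le (mul_sinh_nonneg ?_)
  have hyz : -(|z.im| * (t * p.re ^ 2)) ≤ z.im * (p.im * p.re) := by
    refine le_trans ?_ (neg_abs_le _)
    rw [abs_mul]
    exact neg_le_neg (mul_le_mul_of_nonneg_left hp (abs_nonneg _))
  have hre : (z * (starRingEnd ℂ) p).re = z.re * p.re + z.im * p.im := by
    simp [Complex.mul_re]
  calc 0 ≤ √μ * p.re ^ 2 * (√μ + (z.re - t * |z.im|)) :=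
        mul_nonneg (by positivity) (by linarith)
    _ = μ * p.re ^ 2 + √μ * (z.re * p.re ^ 2 - |z.im| * (t * p.re ^ 2)) := by
        linear_combination p.re ^ 2 * sq_sqrt hμ
    _ ≤ μ * p.re ^ 2 + √μ * (z.re * p.re ^ 2 + z.im * (p.im * p.re)) := by
        gcongr; linarith
    _ = p.re * w := by simp only [w, hre]; ring

lemma sum_psk_re_mul_exp_nonneg {K : ℕ} (hK : 4 ∣ K) {μ : ℝ} (hμ : 0 ≤ μ) {z : ℂ}
    (hz : -√μ ≤ z.re - cot (2 * π / K) * |z.im|) :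
    0 ≤ ∑ k ∈ Icc 1 K, (psk K k).re *
      rexp (μ * (psk K k).re + √μ * (z * (starRingEnd ℂ) (psk K k)).re) :=
  sum_psk_nonneg_of_antipodal (dvd_trans (by norm_num) hK)
    (fun p => p.re * rexp (μ * p.re + √μ * (z * (starRingEnd ℂ) p).re))
    fun k => re_mul_exp_add_antipodal_nonneg hμ (abs_psk_im_mul_re_le hK k) hz

lemma abs_sum_mul_div_sum_add_le_one {ι : Type*} (s : Finset ι) {c e : ι → ℝ}
    (hc : ∀ i ∈ s, |c i| ≤ 1) (he : ∀ i ∈ s, 0 ≤ e i) {r : ℝ} (hr : 0 ≤ r) :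
    |(∑ i ∈ s, c i * e i) / (∑ i ∈ s, e i + r)| ≤ 1 := by
  have hnum : |∑ i ∈ s, c i * e i| ≤ ∑ i ∈ s, e i := by
    refine (abs_sum_le_sum_abs _ _).trans (sum_le_sum fun i hi => ?_)
    rw [abs_mul, abs_of_nonneg (he i hi)]
    exact mul_le_of_le_one_left (he i hi) (hc i hi)
  have hden : 0 ≤ ∑ i ∈ s, e i + r := add_nonneg (sum_nonneg he) hr
  rw [abs_div, abs_of_nonneg hden]
  exact div_le_one_of_le₀ (hnum.trans (le_add_of_nonneg_right hr)) hden

lemma neg_measureReal_le_integral {Ω : Type*} [MeasurableSpace Ω] {P : Measure Ω}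
    [IsFiniteMeasure P] {f : Ω → ℝ} {S : Set Ω} (hf : AEStronglyMeasurable f P)
    (hS : MeasurableSet S) (hbound : ∀ ω, |f ω| ≤ 1) (hpos : ∀ ω ∉ S, 0 ≤ f ω) :
    -P.real S ≤ ∫ ω, f ω ∂P := by
  rw [← integral_indicator_one hS, ← integral_neg]
  refine integral_mono ((integrable_const 1).indicator hS).neg
    ((integrable_const 1).mono' hf (ae_of_all _ hbound)) fun ω => ?_
  by_cases hω : ω ∈ S
  · simpa [hω] using neg_le_of_abs_le (hbound ω)
  · simpa [hω] using hpos ω hω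

namespace ProbabilityTheory

open scoped NNReal

lemma hasDerivAt_gaussianPDFReal_zero (v : ℝ≥0) (x : ℝ) :
    HasDerivAt (gaussianPDFReal 0 v) (-(x / v) * gaussianPDFReal 0 v x) x := by
  have hexp : HasDerivAt (fun y : ℝ => -y ^ 2 / (2 * v)) (-(x / v)) x :=
    ((hasDerivAt_pow 2 x).neg.div_const (2 * (v : ℝ))).congr_deriv (by push_cast; ring)
  have hpdf : gaussianPDFReal 0 v = fun y => (√(2 * π * v))⁻¹ * rexp (-y ^ 2 / (2 * v)) := by
    simp only [gaussianPDFReal_def, sub_zero]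
  rw [hpdf]
  exact (hexp.exp.const_mul _).congr_deriv (by ring)

lemma integrable_mul_gaussianPDFReal_zero (v : ℝ≥0) :
    Integrable fun x => x * gaussianPDFReal 0 v x := by
  rcases eq_or_ne v 0 with rfl | hv
  · simp
  have hb : (0 : ℝ) < (2 * v)⁻¹ := by
    have := pos_iff_ne_zero.mpr hv
    positivity
  convert (integrable_mul_exp_neg_mul_sq hb).const_mul (√(2 * π * v))⁻¹ using 2 with x
  rw [gaussianPDFReal]
  push_cast
  ring_nf

lemma setIntegral_Ioi_mul_gaussianPDFReal_zero {v : ℝ≥0} (hv : v ≠ 0) (a : ℝ) :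
    ∫ x in Set.Ioi a, x * gaussianPDFReal 0 v x = v * gaussianPDFReal 0 v a := by
  have hv' : (v : ℝ) ≠ 0 := by exact_mod_cast hv
  have hderiv : ∀ x, HasDerivAt (fun y => -(v * gaussianPDFReal 0 v y))
      (x * gaussianPDFReal 0 v x) x := fun x =>
    ((hasDerivAt_gaussianPDFReal_zero v x).const_mul (v : ℝ)).neg.congr_deriv
      (by linear_combination gaussianPDFReal 0 v x * mul_div_cancel₀ x hv')
  have hint := (integrable_mul_gaussianPDFReal_zero v).integrableOn (s := Set.Ioi a)
  have hlim : Filter.Tendsto (fun y => -(v * gaussianPDFReal 0 v y)) Filter.atTop (nhds 0) :=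
    tendsto_zero_of_hasDerivAt_of_integrableOn_Ioi (fun x _ => hderiv x) hint
      ((integrable_gaussianPDFReal 0 v).const_mul _).neg.integrableOn
  rw [integral_Ioi_of_hasDerivAt_of_tendsto' (fun x _ => hderiv x) hint hlim]
  ring

lemma gaussianReal_real_Ioi_le {v : ℝ≥0} (hv : v ≠ 0) {a : ℝ} (ha : 0 < a) :
    (gaussianReal 0 v).real (Set.Ioi a) ≤ v * gaussianPDFReal 0 v a / a := by
  rw [measureReal_def, gaussianReal_apply_eq_integral 0 hv,
    ENNReal.toReal_ofReal (setIntegral_nonneg measurableSet_Ioi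
      fun x _ => gaussianPDFReal_nonneg 0 v x),
    le_div_iff₀ ha, ← setIntegral_Ioi_mul_gaussianPDFReal_zero hv, ← integral_mul_const]
  refine setIntegral_mono_on ((integrable_gaussianPDFReal 0 v).mul_const a).integrableOn
    (integrable_mul_gaussianPDFReal_zero v).integrableOn measurableSet_Ioi fun x hx => ?_
  rw [mul_comm]
  exact mul_le_mul_of_nonneg_right (le_of_lt hx) (gaussianPDFReal_nonneg 0 v x)

lemma map_linear_prod_gaussianReal {m₁ m₂ : ℝ} {v₁ v₂ : ℝ≥0} (a b : ℝ) :
    ((gaussianReal m₁ v₁).prod (gaussianReal m₂ v₂)).map (fun p => a * p.1 + b * p.2) =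
      gaussianReal (a * m₁ + b * m₂)
        (.mk (a ^ 2) (sq_nonneg a) * v₁ + .mk (b ^ 2) (sq_nonneg b) * v₂) := by
  have hX : ((gaussianReal m₁ v₁).prod (gaussianReal m₂ v₂)).map (fun p => a * p.1)
      = gaussianReal (a * m₁) (.mk (a ^ 2) (sq_nonneg a) * v₁) := by
    rw [← gaussianReal_map_const_mul]
    conv_rhs => rw [← Measure.fst_prod (μ := gaussianReal m₁ v₁) (ν := gaussianReal m₂ v₂),
      Measure.fst, Measure.map_map (by fun_prop) measurable_fst]
    rfl
  have hY : ((gaussianReal m₁ v₁).prod (gaussianReal m₂ v₂)).map (fun p => b * p.2)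
      = gaussianReal (b * m₂) (.mk (b ^ 2) (sq_nonneg b) * v₂) := by
    rw [← gaussianReal_map_const_mul]
    conv_rhs => rw [← Measure.snd_prod (μ := gaussianReal m₁ v₁) (ν := gaussianReal m₂ v₂),
      Measure.snd, Measure.map_map (by fun_prop) measurable_snd]
    rfl
  exact gaussianReal_add_gaussianReal_of_indepFun
    (indepFun_prod (X := fun x : ℝ => a * x) (Y := fun y : ℝ => b * y) (by fun_prop)
      (by fun_prop)) hX hY

lemma measureReal_lt_neg_fst_add_mul_snd_le (c : ℝ) {u : ℝ} (hu : 0 < u) :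
    ((gaussianReal 0 1).prod (gaussianReal 0 1)).real {p | u < -p.1 + c * p.2}
      ≤ √(1 + c ^ 2) * rexp (-(u ^ 2 / (2 * (1 + c ^ 2)))) / (u * √(2 * π)) := by
  set v : ℝ≥0 := .mk ((-1) ^ 2) (sq_nonneg (-1)) * 1 + .mk (c ^ 2) (sq_nonneg c) * 1
  have hv : (v : ℝ) = 1 + c ^ 2 := by simp [v]
  have hv0 : v ≠ 0 := by rw [← NNReal.coe_ne_zero, hv]; positivity
  have hmap := map_linear_prod_gaussianReal (m₁ := 0) (m₂ := 0) (v₁ := 1) (v₂ := 1) (-1) c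
  simp only [mul_zero, add_zero] at hmap
  have hpre : {p : ℝ × ℝ | u < -p.1 + c * p.2} = (fun p => -1 * p.1 + c * p.2) ⁻¹' Set.Ioi u := by
    ext p; simp
  rw [hpre, ← map_measureReal_apply (by fun_prop) measurableSet_Ioi, hmap]
  refine (gaussianReal_real_Ioi_le hv0 hu).trans_eq ?_
  have hsq : √(2 * π * v) = √(2 * π) * √(1 + c ^ 2) := by
    rw [hv, Real.sqrt_mul (by positivity)]
  rw [gaussianPDFReal, hsq, hv, sub_zero, neg_div]
  field_simp
  rw [sq_sqrt (by positivity)]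

lemma measureReal_fst_sub_mul_abs_snd_lt_le {t u : ℝ} (ht : 0 ≤ t) (hu : 0 < u) :
    ((gaussianReal 0 1).prod (gaussianReal 0 1)).real {p | p.1 - t * |p.2| < -u}
      ≤ 2 * ((1 + t) * rexp (-(u ^ 2 / (2 * (1 + t) ^ 2))) / (u * √(2 * π))) := by
  have hsub : {p : ℝ × ℝ | p.1 - t * |p.2| < -u}
      ⊆ {p | u < -p.1 + t * p.2} ∪ {p | u < -p.1 + -t * p.2} := by
    intro p hp
    rcases abs_cases p.2 with ⟨h, -⟩ | ⟨h, -⟩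
    · left; simp only [Set.mem_ofPred_eq, h] at hp ⊢; linarith
    · right; simp only [Set.mem_ofPred_eq, h] at hp ⊢; linarith
  have hsqrt : √(1 + t ^ 2) ≤ 1 + t := Real.sqrt_le_iff.mpr ⟨by linarith, by nlinarith⟩
  have hexp : rexp (-(u ^ 2 / (2 * (1 + t ^ 2)))) ≤ rexp (-(u ^ 2 / (2 * (1 + t) ^ 2))) := by
    gcongr
    nlinarith
  have hhalf : √(1 + t ^ 2) * rexp (-(u ^ 2 / (2 * (1 + t ^ 2)))) / (u * √(2 * π))
      ≤ (1 + t) * rexp (-(u ^ 2 / (2 * (1 + t) ^ 2))) / (u * √(2 * π)) := by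
    gcongr
  have h₁ := measureReal_lt_neg_fst_add_mul_snd_le t hu
  have h₂ := measureReal_lt_neg_fst_add_mul_snd_le (-t) hu
  rw [neg_sq] at h₂
  calc _ ≤ _ := measureReal_mono hsub
    _ ≤ _ := measureReal_union_le _ _
    _ ≤ _ := by linarith

end ProbabilityTheory

instance (M : ℕ) : IsProbabilityMeasure (seMeasure M) := by
  rw [seMeasure]; infer_instance

lemma seMeasure_real_preimage_fst (M : ℕ) (B : Set (ℝ × ℝ)) :
    (seMeasure M).real (Prod.fst ⁻¹' B)
      = ((gaussianReal 0 1).prod (gaussianReal 0 1)).real B := by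
  rw [← Set.prod_univ, seMeasure, measureReal_prod_prod, probReal_univ, mul_one]

lemma neg_measureReal_le_EKM {K : ℕ} (hK : 4 ∣ K) (M : ℕ) {ν : ℝ}
    (hμ : 0 ≤ ν * log ((K : ℝ) * M)) :
    -(seMeasure M).real (Prod.fst ⁻¹'
        {p | p.1 - cot (2 * π / K) * |p.2| < -√(ν * log ((K : ℝ) * M))}) ≤ EKM K M ν := by
  have hexp : ∀ x, 0 ≤ rexp x := fun x => (exp_pos x).le
  exact neg_measureReal_le_integral (Measurable.aestronglyMeasurable (by fun_prop))
    (measurable_fst (measurableSet_lt (by fun_prop) (by fun_prop)))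
    (fun ω => abs_sum_mul_div_sum_add_le_one _ (fun k _ => abs_psk_re_le_one K k)
      (fun k _ => hexp _) (sum_nonneg fun j _ => sum_nonneg fun b _ => hexp _))
    (fun ω hω => div_nonneg (sum_psk_re_mul_exp_nonneg hK hμ (by simpa using hω))
      (add_nonneg (sum_nonneg fun a _ => hexp _)
        (sum_nonneg fun j _ => sum_nonneg fun b _ => hexp _)))

/-- **Lower bound on `E_{K,M}(ν)` valid for all `ν > 0`** (K ≥ 4 a multiple of 4, M ≥ 2):
`E_{K,M}(ν) ≥ −2(1+cot(2π/K))·(KM)^{−ν/(2(1+cot(2π/K))²)}/√(2πν ln(KM))`. -/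
theorem EKM_lower_bound_all_nu (K M : ℕ) (hK : 4 ≤ K) (hK4 : 4 ∣ K) (hM : 2 ≤ M)
    (ν : ℝ) (hν : 0 < ν) :
    -(2 * (1 + Real.cot (2 * Real.pi / K)) *
        ((K : ℝ) * M) ^ (-(ν / (2 * (1 + Real.cot (2 * Real.pi / K)) ^ 2))) /
        Real.sqrt (2 * Real.pi * ν * Real.log ((K : ℝ) * M)))
      ≤ EKM K M ν := by
  set t := cot (2 * π / K)
  set μ := ν * log ((K : ℝ) * M) with hμ_def
  have hKM : 1 < (K : ℝ) * M := by
    have : (4 : ℝ) ≤ K := by exact_mod_cast hK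
    have : (2 : ℝ) ≤ M := by exact_mod_cast hM
    nlinarith
  have hμ : 0 < μ := mul_pos hν (log_pos hKM)
  have hbad := measureReal_fst_sub_mul_abs_snd_lt_le (cot_two_pi_div_nonneg hK) (sqrt_pos.mpr hμ)
  rw [← seMeasure_real_preimage_fst M] at hbad
  have hpow : ((K : ℝ) * M) ^ (-(ν / (2 * (1 + t) ^ 2)))
      = rexp (-(√μ ^ 2 / (2 * (1 + t) ^ 2))) := by
    rw [rpow_def_of_pos (by linarith), sq_sqrt hμ.le, hμ_def]
    ring_nf
  have hsqrt : √(2 * π * ν * log ((K : ℝ) * M)) = √μ * √(2 * π) := by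
    rw [← sqrt_mul hμ.le, hμ_def]
    ring_nf
  calc _ = -(2 * ((1 + t) * rexp (-(√μ ^ 2 / (2 * (1 + t) ^ 2))) / (√μ * √(2 * π)))) := by
        rw [hpow, hsqrt]; ring
    _ ≤ _ := neg_le_neg hbad
    _ ≤ EKM K M ν := neg_measureReal_le_EKM hK4 M hμ.le
end
end

section
/- Let K = 2 and M ≥ 2. For every ν > 0, E_{2,M}(ν) ≥ − (2M)^{−ν/2} / √(2π·ν·ln(2M)). -/
open MeasureTheory ProbabilityTheory Finset

noncomputable section

/-!
For `K = 2` the integrand `N / D` is `(eᵗ - e⁻ᵗ) / (eᵗ + e⁻ᵗ + T)` with `t = μ + √μ · Re U₁` and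
`T ≥ 0`. This ratio is always `≥ -1`, and it is `≥ 0` as soon as `t ≥ 0`, i.e. `Re U₁ ≥ -√μ`.
Hence `E_{2,M}(ν) ≥ -P(Z < -√μ)` for a standard Gaussian `Z`. The Mills-ratio bound
`P(Z > s) ≤ ∫_s^∞ (x / s) φ(x) dx = φ(s) / s`, taken at `s = √μ`, equals `(2M)^{-ν/2} / √(2πμ)`.
-/

lemma gaussianPDFReal_zero_one (x : ℝ) :
    gaussianPDFReal 0 1 x = (√(2 * Real.pi))⁻¹ * Real.exp (-(x ^ 2 / 2)) := by
  simp [gaussianPDFReal, neg_div]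

lemma hasDerivAt_neg_gaussianPDFReal_zero_one (x : ℝ) :
    HasDerivAt (fun y => -gaussianPDFReal 0 1 y) (x * gaussianPDFReal 0 1 x) x := by
  have h : HasDerivAt (fun y : ℝ => -(y ^ 2 / 2)) (-x) x := by
    simpa using ((hasDerivAt_pow 2 x).div_const 2).fun_neg
  simp only [gaussianPDFReal_zero_one]
  exact (h.exp.const_mul _).fun_neg.congr_deriv (by ring)

lemma tendsto_gaussianPDFReal_zero_one_atTop :
    Filter.Tendsto (gaussianPDFReal 0 1) Filter.atTop (nhds 0) := by
  rw [funext gaussianPDFReal_zero_one, ← mul_zero (√(2 * Real.pi))⁻¹]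
  refine (Real.tendsto_exp_atBot.comp ?_).const_mul _
  exact Filter.tendsto_neg_atTop_atBot.comp
    ((Filter.tendsto_pow_atTop two_ne_zero).atTop_div_const two_pos)

lemma integral_Ioi_mul_gaussianPDFReal_zero_one {s : ℝ} (hs : 0 ≤ s) :
    ∫ x in Set.Ioi s, x * gaussianPDFReal 0 1 x = gaussianPDFReal 0 1 s := by
  have := integral_Ioi_of_hasDerivAt_of_nonneg' (a := s)
    (fun x _ => hasDerivAt_neg_gaussianPDFReal_zero_one x)
    (fun x hx => mul_nonneg (hs.trans hx.out.le) (gaussianPDFReal_nonneg 0 1 x))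
    tendsto_gaussianPDFReal_zero_one_atTop.neg
  simpa using this

lemma gaussianReal_Iio_neg (v : NNReal) (s : ℝ) :
    gaussianReal 0 v (Set.Iio (-s)) = gaussianReal 0 v (Set.Ioi s) := by
  have hsymm : (gaussianReal 0 v).map (fun x => -x) = gaussianReal 0 v := by
    simpa using gaussianReal_map_neg (μ := 0) (v := v)
  rw [← hsymm, Measure.map_apply measurable_neg measurableSet_Ioi]
  congr 1
  ext x
  simp

lemma gaussianReal_real_Ioi_le {s : ℝ} (hs : 0 < s) :
    (gaussianReal 0 1).real (Set.Ioi s) ≤ gaussianPDFReal 0 1 s / s := by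
  have hxφ : IntegrableOn (fun x => x * gaussianPDFReal 0 1 x) (Set.Ioi s) :=
    integrableOn_Ioi_deriv_of_nonneg' (fun x _ => hasDerivAt_neg_gaussianPDFReal_zero_one x)
      (fun x hx => mul_nonneg (hs.trans hx.out).le (gaussianPDFReal_nonneg 0 1 x))
      tendsto_gaussianPDFReal_zero_one_atTop.neg
  rw [measureReal_def, gaussianReal_apply_eq_integral 0 one_ne_zero,
    ENNReal.toReal_ofReal
      (setIntegral_nonneg measurableSet_Ioi fun x _ => gaussianPDFReal_nonneg 0 1 x)]
  calc ∫ x in Set.Ioi s, gaussianPDFReal 0 1 x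
      ≤ ∫ x in Set.Ioi s, x * gaussianPDFReal 0 1 x / s := by
        refine setIntegral_mono_on (integrable_gaussianPDFReal 0 1).integrableOn
          (hxφ.div_const s) measurableSet_Ioi fun x hx => ?_
        rw [le_div_iff₀ hs, mul_comm]
        exact mul_le_mul_of_nonneg_right hx.out.le (gaussianPDFReal_nonneg 0 1 x)
    _ = gaussianPDFReal 0 1 s / s := by
        rw [integral_div, integral_Ioi_mul_gaussianPDFReal_zero_one hs.le]

lemma gaussianPDFReal_zero_one_sqrt_div_sqrt {μ : ℝ} (hμ : 0 < μ) :
    gaussianPDFReal 0 1 √μ / √μ = Real.exp (-(μ / 2)) / √(2 * Real.pi * μ) := by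
  rw [gaussianPDFReal_zero_one, Real.sq_sqrt hμ.le, Real.sqrt_mul (by positivity) μ]
  field_simp

lemma psk_two_one : psk 2 1 = -1 := by
  rw [psk, show 2 * (Real.pi : ℂ) * Complex.I * ((1 : ℕ) : ℂ) / ((2 : ℕ) : ℂ)
    = Real.pi * Complex.I by push_cast; ring, Complex.exp_pi_mul_I]

lemma psk_two_two : psk 2 2 = 1 := by
  rw [psk, show 2 * (Real.pi : ℂ) * Complex.I * ((2 : ℕ) : ℂ) / ((2 : ℕ) : ℂ)
    = 2 * Real.pi * Complex.I by push_cast; ring, Complex.exp_two_pi_mul_I]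

def bpskRatio (t T : ℝ) : ℝ :=
  (Real.exp t - Real.exp (-t)) / (Real.exp t + Real.exp (-t) + T)

section bpskRatio

variable {T : ℝ} (hT : 0 ≤ T)
include hT

lemma bpskRatio_denom_pos (t : ℝ) : 0 < Real.exp t + Real.exp (-t) + T := by
  positivity

lemma neg_one_le_bpskRatio (t : ℝ) : -1 ≤ bpskRatio t T := by
  rw [bpskRatio, le_div_iff₀ (bpskRatio_denom_pos hT t)]
  linarith [Real.exp_pos t]

lemma bpskRatio_le_one (t : ℝ) : bpskRatio t T ≤ 1 := by
  rw [bpskRatio, div_le_one (bpskRatio_denom_pos hT t)]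
  linarith [Real.exp_pos (-t)]

lemma bpskRatio_nonneg {t : ℝ} (ht : 0 ≤ t) : 0 ≤ bpskRatio t T :=
  div_nonneg (sub_nonneg.mpr (Real.exp_le_exp.mpr (by linarith))) (bpskRatio_denom_pos hT t).le

lemma indicator_le_bpskRatio {μ : ℝ} (hμ : 0 ≤ μ) (x : ℝ) :
    (Set.Iio (-√μ)).indicator (fun _ => -1) x ≤ bpskRatio (μ + √μ * x) T := by
  by_cases hx : x < -√μ
  · simpa [hx] using neg_one_le_bpskRatio hT _
  · rw [Set.indicator_of_notMem (show x ∉ Set.Iio (-√μ) from hx)]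
    refine bpskRatio_nonneg hT ?_
    nlinarith [Real.sq_sqrt hμ, Real.sqrt_nonneg μ]

end bpskRatio

/-- `N / D` for `K = 2`, where `π₁ = -1`, `π₂ = 1` and the imaginary parts of the `U_j` drop out. -/
def bpskIntegrand (M : ℕ) (μ : ℝ) (u : (ℝ × ℝ) × ((Fin (M - 1) → ℝ) × (Fin (M - 1) → ℝ))) :
    ℝ :=
  bpskRatio (μ + √μ * u.1.1) (∑ j, (Real.exp (-(√μ * u.2.1 j)) + Real.exp (√μ * u.2.1 j)))

lemma EKM_two_eq (M : ℕ) (ν : ℝ) :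
    EKM 2 M ν = ∫ u, bpskIntegrand M (ν * Real.log (2 * M)) u ∂(seMeasure M) := by
  unfold EKM
  congr 1
  funext u
  simp only [show Finset.Icc 1 2 = ({1, 2} : Finset ℕ) from rfl,
    Finset.sum_pair (show (1 : ℕ) ≠ 2 by norm_num), psk_two_one, psk_two_two, bpskIntegrand,
    bpskRatio, Nat.cast_ofNat, map_neg, map_one, mul_neg, mul_one, Complex.neg_re, Complex.one_re,
    Complex.add_re, Complex.mul_re, Complex.ofReal_re, Complex.ofReal_im, Complex.I_re,
    Complex.I_im, Complex.neg_im, Complex.one_im, neg_zero, mul_zero, sub_zero]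
  ring_nf

instance inst_s6 (M : ℕ) : IsProbabilityMeasure (seMeasure M) := by
  unfold seMeasure; infer_instance

lemma seMeasure_map_fst_fst (M : ℕ) :
    (seMeasure M).map (fun u => u.1.1) = gaussianReal 0 1 := by
  change (seMeasure M).map (Prod.fst ∘ Prod.fst) = _
  rw [← Measure.map_map measurable_fst measurable_fst]
  simp [seMeasure]

lemma integrable_bpskIntegrand (M : ℕ) (μ : ℝ) :
    Integrable (bpskIntegrand M μ) (seMeasure M) := by
  have hmeas : Measurable (bpskIntegrand M μ) := by unfold bpskIntegrand bpskRatio; fun_prop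
  refine Integrable.of_bound hmeas.aestronglyMeasurable 1 (ae_of_all _ fun u => ?_)
  have hT : 0 ≤ ∑ j, (Real.exp (-(√μ * u.2.1 j)) + Real.exp (√μ * u.2.1 j)) := by positivity
  exact abs_le.mpr ⟨neg_one_le_bpskRatio hT _, bpskRatio_le_one hT _⟩

lemma neg_gaussianReal_real_Iio_le_EKM_two (M : ℕ) {ν : ℝ} (hμ : 0 ≤ ν * Real.log (2 * M)) :
    -(gaussianReal 0 1).real (Set.Iio (-√(ν * Real.log (2 * M)))) ≤ EKM 2 M ν := by
  set μ := ν * Real.log (2 * M)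
  set s := √μ
  have hg : Integrable ((Set.Iio (-s)).indicator fun _ => (-1 : ℝ)) (gaussianReal 0 1) :=
    (integrable_const _).indicator measurableSet_Iio
  have hmap := seMeasure_map_fst_fst M
  calc -(gaussianReal 0 1).real (Set.Iio (-s))
      = ∫ u, (Set.Iio (-s)).indicator (fun _ => -1) u.1.1 ∂(seMeasure M) := by
        rw [← integral_map (by fun_prop) (by rw [hmap]; exact hg.aestronglyMeasurable), hmap,
          integral_indicator_const _ measurableSet_Iio]
        simp
    _ ≤ ∫ u, bpskIntegrand M μ u ∂(seMeasure M) := by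
        exact integral_mono ((hmap ▸ hg).comp_measurable (by fun_prop))
          (integrable_bpskIntegrand M μ) fun u => indicator_le_bpskRatio (by positivity) hμ _
    _ = EKM 2 M ν := (EKM_two_eq M ν).symm

/-- **Lower bound on `E_{2,M}(ν)` valid for all `ν > 0`** (BPSK case, M ≥ 2):
`E_{2,M}(ν) ≥ −(2M)^{−ν/2}/√(2πν ln(2M))`. -/
theorem EKM_two_lower_bound_all_nu (M : ℕ) (hM : 2 ≤ M) (ν : ℝ) (hν : 0 < ν) :
    -(((2 : ℝ) * M) ^ (-(ν / 2)) / Real.sqrt (2 * Real.pi * ν * Real.log ((2 : ℝ) * M)))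
      ≤ EKM 2 M ν := by
  have hM' : (1 : ℝ) < 2 * M := by norm_cast; omega
  have hμ : 0 < ν * Real.log (2 * M) := mul_pos hν (Real.log_pos hM')
  have hpow : ((2 : ℝ) * M) ^ (-(ν / 2)) = Real.exp (-(ν * Real.log (2 * M) / 2)) := by
    rw [Real.rpow_def_of_pos (by positivity)]
    ring_nf
  calc -(((2 : ℝ) * M) ^ (-(ν / 2)) / Real.sqrt (2 * Real.pi * ν * Real.log ((2 : ℝ) * M)))
      = -(gaussianPDFReal 0 1 √(ν * Real.log (2 * M)) / √(ν * Real.log (2 * M))) := by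
        rw [gaussianPDFReal_zero_one_sqrt_div_sqrt hμ, hpow, mul_assoc]
    _ ≤ -(gaussianReal 0 1).real (Set.Ioi √(ν * Real.log (2 * M))) :=
        neg_le_neg (gaussianReal_real_Ioi_le (Real.sqrt_pos.mpr hμ))
    _ = -(gaussianReal 0 1).real (Set.Iio (-√(ν * Real.log (2 * M)))) := by
        simp only [measureReal_def, gaussianReal_Iio_neg]
    _ ≤ EKM 2 M ν := neg_gaussianReal_real_Iio_le_EKM_two M hμ.le
end
end

section
/- Let K ≥ 4 be a multiple of 4, μ > 0, and set u̲ = −√μ/(1 + cot(2π/K)). Then for all reals u, v with u ≥ u̲ and v ≥ u̲, Σ_{k=−K/4+1}^{K/4} cos(2πk/K)·sinh( μ·cos(2πk/K) + √μ·(u·cos(2πk/K) + v·sin(2πk/K)) ) ≥ 0. -/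
/-!
Pair the terms `k` and `-k`: with `θ = 2πk/K`, `a = μ + √μ u` and `b = √μ v`, their sum is
`2 cos θ · sinh (a cos θ) · cosh (b sin θ)`. For `|k| ≤ K/4` we have `cos θ ≥ 0`, and `a ≥ 0`
because `cot (2π/K) ≥ 0` gives `u ≥ -√μ`. The unpaired term `k = K/4` vanishes since
`cos (π/2) = 0`.
-/

open Finset

theorem Finset.sum_nonneg_of_add_neg_nonneg {G M : Type*} [AddGroup G] [AddCommMonoid M]
    [LinearOrder M] [IsOrderedCancelAddMonoid M] {s : Finset G} (hs : ∀ k ∈ s, -k ∈ s)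
    {f : G → M} (hf : ∀ k ∈ s, 0 ≤ f k + f (-k)) : 0 ≤ ∑ k ∈ s, f k := by
  have hreflect : ∑ k ∈ s, f (-k) = ∑ k ∈ s, f k :=
    sum_nbij' (- ·) (- ·) hs hs (fun k _ ↦ neg_neg k) (fun k _ ↦ neg_neg k) (fun _ _ ↦ rfl)
  have hdouble : 0 ≤ ∑ k ∈ s, f k + ∑ k ∈ s, f k :=
    calc 0 ≤ ∑ k ∈ s, (f k + f (-k)) := sum_nonneg hf
      _ = ∑ k ∈ s, f k + ∑ k ∈ s, f k := by rw [sum_add_distrib, hreflect]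
  by_contra! hneg
  exact (add_neg hneg hneg).not_ge hdouble

namespace Real

theorem cos_mul_sinh_add_cos_neg_mul_sinh (a b θ : ℝ) :
    cos θ * sinh (a * cos θ + b * sin θ) + cos (-θ) * sinh (a * cos (-θ) + b * sin (-θ))
      = 2 * cos θ * sinh (a * cos θ) * cosh (b * sin θ) := by
  rw [cos_neg, sin_neg, mul_neg, ← sub_eq_add_neg, sinh_add, sinh_sub]
  ring

theorem cos_mul_sinh_add_cos_neg_mul_sinh_nonneg {a θ : ℝ} (b : ℝ) (ha : 0 ≤ a)
    (hθ : 0 ≤ cos θ) :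
    0 ≤ cos θ * sinh (a * cos θ + b * sin θ) + cos (-θ) * sinh (a * cos (-θ) + b * sin (-θ)) := by
  rw [cos_mul_sinh_add_cos_neg_mul_sinh]
  have hsinh : 0 ≤ sinh (a * cos θ) := sinh_nonneg_iff.mpr (mul_nonneg ha hθ)
  have hcosh : 0 ≤ cosh (b * sin θ) := (cosh_pos _).le
  positivity

theorem abs_two_pi_mul_div_le {K : ℕ} {k : ℤ} (hk : 4 * |k| ≤ K) :
    |2 * π * k / K| ≤ π / 2 := by
  have hkR : 4 * |(k : ℝ)| ≤ K := by exact_mod_cast hk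
  rw [abs_div, abs_mul, abs_of_pos two_pi_pos, Nat.abs_cast]
  apply div_le_of_le_mul₀ K.cast_nonneg (by positivity)
  nlinarith [pi_pos]

theorem cot_nonneg_of_mem_Icc {x : ℝ} (hx : x ∈ Set.Icc 0 (π / 2)) : 0 ≤ cot x := by
  rw [cot_eq_cos_div_sin]
  exact div_nonneg (cos_nonneg_of_mem_Icc ⟨by linarith [hx.1, pi_pos], hx.2⟩)
    (sin_nonneg_of_nonneg_of_le_pi hx.1 (by linarith [hx.2, pi_pos]))

theorem cot_two_pi_div_nonneg {K : ℕ} (hK : 4 ≤ K) : 0 ≤ cot (2 * π / K) := by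
  have h := abs_two_pi_mul_div_le (K := K) (k := 1) (by simpa using hK)
  rw [Int.cast_one, mul_one] at h
  exact cot_nonneg_of_mem_Icc ⟨by positivity, le_of_abs_le h⟩

theorem sum_Icc_cos_mul_sinh_nonneg {K : ℕ} (hK : 4 ≤ K) (hK4 : 4 ∣ K) {a : ℝ} (b : ℝ)
    (ha : 0 ≤ a) :
    0 ≤ ∑ k ∈ Icc (1 - (K : ℤ) / 4) ((K : ℤ) / 4),
      cos (2 * π * k / K) * sinh (a * cos (2 * π * k / K) + b * sin (2 * π * k / K)) := by
  obtain ⟨M, hKM⟩ := hK4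
  have hM : (K : ℤ) / 4 = M := by omega
  have hcos : cos (2 * π * ((M : ℤ) : ℝ) / K) = 0 := by
    have hM0 : (M : ℝ) ≠ 0 := by norm_cast; omega
    rw [hKM, Int.cast_natCast, Nat.cast_mul, ← cos_pi_div_two]
    congr 1
    field_simp
    ring
  rw [hM, ← insert_Icc_sub_one_right_eq_Icc (by omega), sum_insert (by simp), hcos, zero_mul,
    zero_add]
  refine sum_nonneg_of_add_neg_nonneg (fun k hk ↦ by simp only [mem_Icc] at hk ⊢; omega)
    fun k hk ↦ ?_
  have hk4 : 4 * |k| ≤ K := by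
    rw [mem_Icc] at hk
    have : |k| ≤ M := abs_le.mpr ⟨by omega, by omega⟩
    omega
  rw [Int.cast_neg, mul_neg, neg_div]
  exact cos_mul_sinh_add_cos_neg_mul_sinh_nonneg b ha
    (cos_nonneg_of_mem_Icc (abs_le.mp (abs_two_pi_mul_div_le hk4)))

end Real

theorem I1_integrand_nonneg_general (K : ℕ) (hK : 4 ≤ K) (hK4 : 4 ∣ K) (μ : ℝ) (hμ : 0 < μ)
    (u v : ℝ)
    (hu : -Real.sqrt μ / (1 + Real.cot (2 * Real.pi / K)) ≤ u) :
    0 ≤ ∑ k ∈ Finset.Icc (1 - (K : ℤ)/4) ((K : ℤ)/4),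
      Real.cos (2 * Real.pi * k / K) *
        Real.sinh (μ * Real.cos (2 * Real.pi * k / K)
          + Real.sqrt μ * (u * Real.cos (2 * Real.pi * k / K)
              + v * Real.sin (2 * Real.pi * k / K))) := by
  have hu' : -Real.sqrt μ ≤ u := by
    refine le_trans ?_ hu
    rw [neg_div, neg_le_neg_iff]
    exact div_le_self (Real.sqrt_nonneg μ) (by linarith [Real.cot_two_pi_div_nonneg hK])
  have ha : 0 ≤ μ + Real.sqrt μ * u := by
    nlinarith [Real.sq_sqrt hμ.le, Real.sqrt_nonneg μ]
  convert Real.sum_Icc_cos_mul_sinh_nonneg hK hK4 (Real.sqrt μ * v) ha using 4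
  ring

/-- **Non-negativity of the integrand of I₁.**
For `K ≥ 4` a multiple of 4, `μ > 0`, and `u, v ≥ u̲ = −√μ/(1 + cot(2π/K))`,
`∑_{k=−K/4+1}^{K/4} cos(2πk/K)·sinh(μ cos(2πk/K) + √μ(u cos(2πk/K) + v sin(2πk/K))) ≥ 0`. -/
theorem I1_integrand_nonneg (K : ℕ) (hK : 4 ≤ K) (hK4 : 4 ∣ K) (μ : ℝ) (hμ : 0 < μ)
    (u v : ℝ)
    (hu : -Real.sqrt μ / (1 + Real.cot (2 * Real.pi / K)) ≤ u)
    (hv : -Real.sqrt μ / (1 + Real.cot (2 * Real.pi / K)) ≤ v) :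
    0 ≤ ∑ k ∈ Finset.Icc (1 - (K : ℤ)/4) ((K : ℤ)/4),
      Real.cos (2 * Real.pi * k / K) *
        Real.sinh (μ * Real.cos (2 * Real.pi * k / K)
          + Real.sqrt μ * (u * Real.cos (2 * Real.pi * k / K)
              + v * Real.sin (2 * Real.pi * k / K))) :=
  I1_integrand_nonneg_general K hK hK4 μ hμ u v hu
end

section
/- Let K ≥ 4 be a multiple of 4, μ > 0, X > 0, and v ∈ ℝ. With cos_k = cos(2πk/K), sin_k = sin(2πk/K), and Y_k(u) = μ·cos_k + √μ·(u·cos_k + v·sin_k), the function f(u) = (Σ_{k=−K/4+1}^{K/4} 2·cos_k·sinh Y_k(u)) / (X + Σ_{a=−K/4+1}^{K/4} 2·cosh Y_a(u)) is strictly increasing on ℝ. -/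
open Finset Real

/-! With `Y_k' = t c_k`, the denominator `D = X + Σ w_k cosh Y_k` has derivative `t N`, where
`N = Σ w_k c_k sinh Y_k` is the numerator, so `(N / D)' = t (P D - N²) / D²` with
`P = Σ w_k c_k² cosh Y_k`. Cauchy–Schwarz together with `|sinh| ≤ cosh` gives
`N² ≤ P · Σ w_k cosh Y_k`, and `X P > 0` makes the inequality strict. -/

theorem sq_sum_mul_sinh_le_sum_mul_cosh_mul_sum_cosh {ι : Type*} (s : Finset ι) {w : ι → ℝ}
    (hw : ∀ k ∈ s, 0 ≤ w k) (c y : ι → ℝ) :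
    (∑ k ∈ s, w k * c k * sinh (y k)) ^ 2 ≤
      (∑ k ∈ s, w k * c k ^ 2 * cosh (y k)) * ∑ k ∈ s, w k * cosh (y k) :=
  sum_sq_le_sum_mul_sum_of_sq_le_mul s
    (fun k hk => by have := hw k hk; positivity)
    (fun k hk => by have := hw k hk; positivity)
    (fun k _ => by nlinarith [sq_nonneg (w k * c k), cosh_sq_sub_sinh_sq (y k)])

theorem sq_sum_mul_sinh_lt_sum_mul_cosh_mul_add_sum_cosh {ι : Type*} {s : Finset ι}
    {w c : ι → ℝ} {X : ℝ} (hX : 0 < X) (hw : ∀ k ∈ s, 0 < w k)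
    (hc : ∃ k ∈ s, c k ≠ 0) (y : ι → ℝ) :
    (∑ k ∈ s, w k * c k * sinh (y k)) ^ 2 <
      (∑ k ∈ s, w k * c k ^ 2 * cosh (y k)) * (X + ∑ k ∈ s, w k * cosh (y k)) := by
  have hP : 0 < ∑ k ∈ s, w k * c k ^ 2 * cosh (y k) := by
    obtain ⟨k, hk, hck⟩ := hc
    exact sum_pos' (fun j hj => by have := hw j hj; positivity)
      ⟨k, hk, by have := hw k hk; positivity⟩
  have := sq_sum_mul_sinh_le_sum_mul_cosh_mul_sum_cosh s (fun k hk => (hw k hk).le) c y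
  nlinarith [mul_pos hP hX]

theorem strictMono_sum_mul_sinh_div_add_sum_mul_cosh {ι : Type*} {s : Finset ι} {w c : ι → ℝ}
    {X t : ℝ} (hX : 0 < X) (hw : ∀ k ∈ s, 0 < w k) (hc : ∃ k ∈ s, c k ≠ 0) (ht : 0 < t)
    {y : ι → ℝ → ℝ} (hy : ∀ k u, HasDerivAt (y k) (t * c k) u) :
    StrictMono fun u =>
      (∑ k ∈ s, w k * c k * sinh (y k u)) / (X + ∑ k ∈ s, w k * cosh (y k u)) := by
  refine strictMono_of_deriv_pos fun u => ?_
  set N := ∑ k ∈ s, w k * c k * sinh (y k u)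
  set P := ∑ k ∈ s, w k * c k ^ 2 * cosh (y k u)
  set D := X + ∑ k ∈ s, w k * cosh (y k u)
  have hN : HasDerivAt (fun u => ∑ k ∈ s, w k * c k * sinh (y k u)) (t * P) u := by
    refine (HasDerivAt.fun_sum fun k _ => ((hy k u).sinh).const_mul (w k * c k)).congr_deriv ?_
    rw [mul_sum]
    exact sum_congr rfl fun k _ => by ring
  have hD : HasDerivAt (fun u => X + ∑ k ∈ s, w k * cosh (y k u)) (t * N) u := by
    refine ((HasDerivAt.fun_sum fun k _ => ((hy k u).cosh).const_mul (w k)).const_add X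
      ).congr_deriv ?_
    rw [mul_sum]
    exact sum_congr rfl fun k _ => by ring
  have hDpos : 0 < D :=
    add_pos_of_pos_of_nonneg hX (sum_nonneg fun k hk => by have := hw k hk; positivity)
  rw [(hN.fun_div hD hDpos.ne').deriv]
  have hCS := sq_sum_mul_sinh_lt_sum_mul_cosh_mul_add_sum_cosh hX hw hc (fun k => y k u)
  have hnum : t * P * D - N * (t * N) = t * (P * D - N ^ 2) := by ring
  rw [hnum]
  exact div_pos (mul_pos ht (sub_pos.2 hCS)) (by positivity)

theorem I1_integrand_strictMono_general (K : ℕ) (hK : 4 ≤ K)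
    (μ : ℝ) (hμ : 0 < μ) (X : ℝ) (hX : 0 < X) (v : ℝ) :
    StrictMono (fun u : ℝ =>
      (∑ k ∈ Finset.Icc (1 - (K : ℤ)/4) ((K : ℤ)/4),
          2 * Real.cos (2 * Real.pi * k / K) *
            Real.sinh (μ * Real.cos (2 * Real.pi * k / K)
              + Real.sqrt μ * (u * Real.cos (2 * Real.pi * k / K)
                  + v * Real.sin (2 * Real.pi * k / K)))) /
      (X + ∑ a ∈ Finset.Icc (1 - (K : ℤ)/4) ((K : ℤ)/4),
          2 * Real.cosh (μ * Real.cos (2 * Real.pi * a / K)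
              + Real.sqrt μ * (u * Real.cos (2 * Real.pi * a / K)
                  + v * Real.sin (2 * Real.pi * a / K))))) := by
  have hzero : (0 : ℤ) ∈ Finset.Icc (1 - (K : ℤ)/4) ((K : ℤ)/4) := by
    rw [mem_Icc]
    omega
  refine strictMono_sum_mul_sinh_div_add_sum_mul_cosh (w := fun _ => 2) hX
    (fun _ _ => two_pos) ⟨0, hzero, by simp⟩ (sqrt_pos.2 hμ) fun k u => ?_
  simpa using ((((hasDerivAt_id u).mul_const (cos (2 * π * k / K))).add_const
    (v * sin (2 * π * k / K))).const_mul (sqrt μ)).const_add (μ * cos (2 * π * k / K))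

/-- **Strict monotonicity of the I₁ integrand as a function of `u = U₁^R`.**
For `K ≥ 4` a multiple of 4, `μ > 0`, `X > 0` and any `v ∈ ℝ`, with
`Y_k(u) = μ·cos(2πk/K) + √μ·(u·cos(2πk/K) + v·sin(2πk/K))`, the function
`u ↦ (∑_{k=−K/4+1}^{K/4} 2 cos(2πk/K) sinh Y_k(u)) / (X + ∑_{a=−K/4+1}^{K/4} 2 cosh Y_a(u))`
is strictly increasing on ℝ. -/
theorem I1_integrand_strictMono (K : ℕ) (hK : 4 ≤ K) (hK4 : 4 ∣ K)
    (μ : ℝ) (hμ : 0 < μ) (X : ℝ) (hX : 0 < X) (v : ℝ) :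
    StrictMono (fun u : ℝ =>
      (∑ k ∈ Finset.Icc (1 - (K : ℤ)/4) ((K : ℤ)/4),
          2 * Real.cos (2 * Real.pi * k / K) *
            Real.sinh (μ * Real.cos (2 * Real.pi * k / K)
              + Real.sqrt μ * (u * Real.cos (2 * Real.pi * k / K)
                  + v * Real.sin (2 * Real.pi * k / K)))) /
      (X + ∑ a ∈ Finset.Icc (1 - (K : ℤ)/4) ((K : ℤ)/4),
          2 * Real.cosh (μ * Real.cos (2 * Real.pi * a / K)
              + Real.sqrt μ * (u * Real.cos (2 * Real.pi * a / K)
                  + v * Real.sin (2 * Real.pi * a / K))))) :=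
  I1_integrand_strictMono_general K hK μ hμ X hX v
end

section
/- Let K ≥ 4 be a multiple of 4, μ > 0, C > 0, and v ∈ ℝ. With cos_a = cos(2πa/K), sin_a = sin(2πa/K), and Y_a(u) = μ·cos_a + √μ·(u·cos_a + v·sin_a), the function g(u) = 2·sinh(μ + √μ·u) / (C + Σ_{a=−K/4+1}^{K/4} 2·cosh Y_a(u)) is strictly increasing on ℝ. -/
/-!
The quotient rule gives `g' = 2√μ · N / D²` with
`N = cosh Y₀ · (C + ∑ 2 cosh Yₐ) - sinh Y₀ · ∑ 2 cosₐ sinh Yₐ = C cosh Y₀ + 2 ∑ (cosh Y₀ cosh Yₐ - cosₐ sinh Y₀ sinh Yₐ)`,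
and every summand is positive because `|sinh| < cosh` and `|cosₐ| ≤ 1`.
-/

open Finset Real

theorem Real.abs_sinh_lt_cosh (x : ℝ) : |sinh x| < cosh x := by
  rw [abs_sinh, ← cosh_abs]
  exact sinh_lt_cosh _

theorem Real.mul_sinh_mul_sinh_lt_cosh_mul_cosh {c : ℝ} (hc : |c| ≤ 1) (x y : ℝ) :
    c * (sinh x * sinh y) < cosh x * cosh y :=
  calc c * (sinh x * sinh y) ≤ |c| * (|sinh x| * |sinh y|) := by
        rw [← abs_mul, ← abs_mul]; exact le_abs_self _
    _ ≤ |sinh x| * |sinh y| := mul_le_of_le_one_left (by positivity) hc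
    _ < cosh x * cosh y :=
        mul_lt_mul'' (abs_sinh_lt_cosh x) (abs_sinh_lt_cosh y) (abs_nonneg _) (abs_nonneg _)

theorem Real.cosh_mul_add_sum_cosh_sub_sinh_mul_sum_sinh_pos {ι : Type*} (s : Finset ι)
    {C : ℝ} (hC : 0 < C) {w c : ι → ℝ} (hw : ∀ i ∈ s, 0 ≤ w i) (hc : ∀ i ∈ s, |c i| ≤ 1)
    (x : ℝ) (y : ι → ℝ) :
    0 < cosh x * (C + ∑ i ∈ s, w i * cosh (y i)) - sinh x * ∑ i ∈ s, w i * (sinh (y i) * c i) := by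
  have hsplit : cosh x * (C + ∑ i ∈ s, w i * cosh (y i)) - sinh x * ∑ i ∈ s, w i * (sinh (y i) * c i)
      = C * cosh x + ∑ i ∈ s, w i * (cosh x * cosh (y i) - c i * (sinh x * sinh (y i))) := by
    simp only [mul_add, mul_sum, add_sub_assoc, ← sum_sub_distrib]
    congr 1
    · ring
    · exact sum_congr rfl fun i _ => by ring
  rw [hsplit]
  refine add_pos_of_pos_of_nonneg (mul_pos hC (cosh_pos x)) (sum_nonneg fun i hi => ?_)
  exact mul_nonneg (hw i hi) (sub_nonneg.2 (mul_sinh_mul_sinh_lt_cosh_mul_cosh (hc i hi) x (y i)).le)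

theorem Real.strictMono_sinh_div_add_sum_cosh {ι : Type*} (s : Finset ι) {p : ℝ} (hp : 0 < p)
    (α : ℝ) {C : ℝ} (hC : 0 < C) {w c : ι → ℝ} (hw : ∀ i ∈ s, 0 ≤ w i)
    (hc : ∀ i ∈ s, |c i| ≤ 1) (γ : ι → ℝ) :
    StrictMono fun t => p * sinh (α + t) / (C + ∑ i ∈ s, w i * cosh (γ i + c i * t)) := by
  refine strictMono_of_deriv_pos fun t => ?_
  have hN : HasDerivAt (fun t => p * sinh (α + t)) (p * cosh (α + t)) t := by
    simpa using (((hasDerivAt_id t).const_add α).sinh).const_mul p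
  have hD : HasDerivAt (fun t => C + ∑ i ∈ s, w i * cosh (γ i + c i * t))
      (∑ i ∈ s, w i * (sinh (γ i + c i * t) * c i)) t := by
    refine (HasDerivAt.fun_sum fun i _ => ?_).const_add C
    simpa using ((((hasDerivAt_id t).const_mul (c i)).const_add (γ i)).cosh).const_mul (w i)
  have hDpos : 0 < C + ∑ i ∈ s, w i * cosh (γ i + c i * t) :=
    add_pos_of_pos_of_nonneg hC (sum_nonneg fun i hi => mul_nonneg (hw i hi) (cosh_pos _).le)
  rw [(hN.fun_div hD hDpos.ne').deriv]
  refine div_pos ?_ (pow_pos hDpos 2)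
  rw [mul_assoc, mul_assoc, ← mul_sub]
  exact mul_pos hp (cosh_mul_add_sum_cosh_sub_sinh_mul_sum_sinh_pos s hC hw hc _ _)

theorem lb_integrand_strictMono_general (K : ℕ)
    (μ : ℝ) (hμ : 0 < μ) (C : ℝ) (hC : 0 < C) (v : ℝ) :
    StrictMono (fun u : ℝ =>
      (2 * Real.sinh (μ + Real.sqrt μ * u)) /
      (C + ∑ a ∈ Finset.Icc (1 - (K : ℤ)/4) ((K : ℤ)/4),
          2 * Real.cosh (μ * Real.cos (2 * Real.pi * a / K)
              + Real.sqrt μ * (u * Real.cos (2 * Real.pi * a / K)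
                  + v * Real.sin (2 * Real.pi * a / K))))) := by
  set θ : ℤ → ℝ := fun a => 2 * π * a / K
  have hg := strictMono_sinh_div_add_sum_cosh (Icc (1 - (K : ℤ) / 4) ((K : ℤ) / 4)) two_pos μ hC
    (w := fun _ => 2) (fun _ _ => zero_le_two) (c := fun a => cos (θ a))
    (fun a _ => abs_cos_le_one _) (fun a => μ * cos (θ a) + √μ * (v * sin (θ a)))
  convert hg.comp (strictMono_mul_left_of_pos (sqrt_pos.2 hμ)) using 2 with u
  · rfl
  congr 2
  refine sum_congr rfl fun a _ => ?_
  congr 2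
  ring

/-- **Strict monotonicity of the lower-bounding integrand as a function of `u = U₁^R`.**
For `K ≥ 4` a multiple of 4, `μ > 0`, `C > 0` and any `v ∈ ℝ`, with
`Y_a(u) = μ·cos(2πa/K) + √μ·(u·cos(2πa/K) + v·sin(2πa/K))`, the function
`u ↦ 2 sinh(μ + √μ u) / (C + ∑_{a=−K/4+1}^{K/4} 2 cosh Y_a(u))` is strictly increasing. -/
theorem lb_integrand_strictMono (K : ℕ) (hK : 4 ≤ K) (hK4 : 4 ∣ K)
    (μ : ℝ) (hμ : 0 < μ) (C : ℝ) (hC : 0 < C) (v : ℝ) :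
    StrictMono (fun u : ℝ =>
      (2 * Real.sinh (μ + Real.sqrt μ * u)) /
      (C + ∑ a ∈ Finset.Icc (1 - (K : ℤ)/4) ((K : ℤ)/4),
          2 * Real.cosh (μ * Real.cos (2 * Real.pi * a / K)
              + Real.sqrt μ * (u * Real.cos (2 * Real.pi * a / K)
                  + v * Real.sin (2 * Real.pi * a / K))))) :=
  lb_integrand_strictMono_general K μ hμ C hC v
end
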